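/- arXiv:2001.01694 — 3 statements merged into one kernel-verified Lean document; each statement's English description precedes it below -/
import Mathlib

section
/- Let M be the set of invariant probability measures of a dynamical system on a locally compact metric space X, let φ : X → ℝ be continuous with β(φ) := sup_{μ ∈ M} ∫ φ dμ finite, and let ψ : X → ℝ be a positive continuous function vanishing at infinity. Define β_∞(φ) as the supremum over sequences (μₙ) in M converging vaguely to the zero measure of limsup ∫ φ dμₙ (in ℝ ∪ {−∞}), assuming at least one such sequence exists. Then β_∞(φ) = lim_{t → +∞} β(φ − tψ). -/
/-!
Write `β_t = β(φ - tψ)`; it is antitone in `t`, so it tends to its infimum.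
Along any sequence `μₙ → 0` vaguely we have `∫ ψ dμₙ → 0`, because `ψ` vanishes at
infinity, hence `limsup ∫ φ dμₙ ≤ β_t + t · lim ∫ ψ dμₙ = β_t` for every `t`.
Conversely, if `l ≤ β_t` for all `t`, pick `μₙ ∈ M` with
`∫ (φ - (n + 1) ψ) dμₙ > l - 1 / (n + 1)`. Then `(n + 1) ∫ ψ dμₙ ≤ β - l + 1`, so
`∫ ψ dμₙ → 0`, which forces `μₙ → 0` vaguely since every compactly supported continuous
function is dominated by a multiple of the positive function `ψ`; and
`∫ φ dμₙ > l - 1 / (n + 1)`.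
-/

open MeasureTheory Filter Topology

section VanishingAtInfinity

variable {X : Type*} [TopologicalSpace X]

theorem tendsto_cocompact_zero_of_forall_abs_lt {g : X → ℝ}
    (hg : ∀ ε > (0 : ℝ), ∃ K : Set X, IsCompact K ∧ ∀ x ∉ K, |g x| < ε) :
    Tendsto g (cocompact X) (𝓝 0) := by
  refine Metric.tendsto_nhds.2 fun ε hε => ?_
  obtain ⟨K, hK, hgK⟩ := hg ε hε
  exact mem_cocompact.2 ⟨K, hK, fun x hx => by simpa [Real.dist_eq] using hgK x hx⟩

theorem hasCompactSupport_max_sub_of_tendsto_cocompact [R1Space X] {g : X → ℝ}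
    (hg : Tendsto g (cocompact X) (𝓝 0)) {a : ℝ} (ha : 0 < a) :
    HasCompactSupport fun x => max (g x - a) 0 := by
  obtain ⟨K, hK, hKg⟩ := mem_cocompact.1 (hg.eventually (gt_mem_nhds ha))
  exact HasCompactSupport.intro hK fun x hx =>
    max_eq_right (by linarith [show g x < a from hKg hx])

theorem Continuous.exists_norm_le_of_tendsto_cocompact [R1Space X] {g : X → ℝ}
    (hg : Continuous g) (hg0 : Tendsto g (cocompact X) (𝓝 0)) : ∃ C, ∀ x, ‖g x‖ ≤ C := by
  have hnorm : Tendsto (fun x => ‖g x‖) (cocompact X) (𝓝 0) := by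
    simpa using hg0.norm
  obtain ⟨C, hC⟩ := ((hg.norm.sub continuous_const).max
    continuous_const).bounded_above_of_compact_support
      (hasCompactSupport_max_sub_of_tendsto_cocompact hnorm one_pos)
  refine ⟨C + 1, fun x => ?_⟩
  have : max (‖g x‖ - 1) 0 ≤ C := (le_abs_self _).trans (hC x)
  linarith [le_max_left (‖g x‖ - 1) 0]

theorem HasCompactSupport.exists_abs_le_mul {f ψ : X → ℝ} (hf : Continuous f)
    (hfc : HasCompactSupport f) (hψ : Continuous ψ) (hψpos : ∀ x, 0 < ψ x) :
    ∃ C, ∀ x, |f x| ≤ C * ψ x := by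
  obtain ⟨C, hC⟩ := (hf.div hψ fun x => (hψpos x).ne').bounded_above_of_compact_support
    (hfc.mul_right (f' := ψ⁻¹))
  refine ⟨C, fun x => ?_⟩
  have : |f x / ψ x| ≤ C := hC x
  rw [abs_div, abs_of_pos (hψpos x), div_le_iff₀ (hψpos x)] at this
  exact this

end VanishingAtInfinity

section Vague

variable {X : Type*} [TopologicalSpace X] [MeasurableSpace X]

def TendstoVaguelyZero (s : ℕ → Measure X) : Prop :=
  ∀ f : X → ℝ, Continuous f → HasCompactSupport f →
    Tendsto (fun n => ∫ x, f x ∂(s n)) atTop (𝓝 0)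

theorem TendstoVaguelyZero.tendsto_integral_of_tendsto_cocompact [R1Space X]
    [OpensMeasurableSpace X] {s : ℕ → Measure X} [∀ n, IsProbabilityMeasure (s n)]
    (hs : TendstoVaguelyZero s) {g : X → ℝ} (hg : Continuous g) (hg0 : ∀ x, 0 ≤ g x)
    (hgc : Tendsto g (cocompact X) (𝓝 0)) (hgi : ∀ n, Integrable g (s n)) :
    Tendsto (fun n => ∫ x, g x ∂(s n)) atTop (𝓝 0) := by
  refine tendsto_order.2 ⟨fun a ha => .of_forall fun n => ha.trans_le (integral_nonneg hg0),
    fun a ha => ?_⟩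
  set h : X → ℝ := fun x => max (g x - a / 2) 0
  have hhc : Continuous h := (hg.sub continuous_const).max continuous_const
  have hhs : HasCompactSupport h :=
    hasCompactSupport_max_sub_of_tendsto_cocompact hgc (half_pos ha)
  have hle : ∀ n, ∫ x, g x ∂(s n) ≤ ∫ x, h x ∂(s n) + a / 2 := fun n => by
    have hhi : Integrable h (s n) := hhc.integrable_of_hasCompactSupport hhs
    calc ∫ x, g x ∂(s n) ≤ ∫ x, (h x + a / 2) ∂(s n) :=
          integral_mono (hgi n) (hhi.add (integrable_const _))
            fun x => by linarith [le_max_left (g x - a / 2) 0]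
      _ = ∫ x, h x ∂(s n) + a / 2 := by simp [integral_add hhi (integrable_const _)]
  filter_upwards [(hs h hhc hhs).eventually (gt_mem_nhds (half_pos ha))] with n hn
  linarith [hle n]

theorem tendstoVaguelyZero_of_tendsto_integral {s : ℕ → Measure X} {ψ : X → ℝ}
    (hψ : Continuous ψ) (hψpos : ∀ x, 0 < ψ x) (hψi : ∀ n, Integrable ψ (s n))
    (hψs : Tendsto (fun n => ∫ x, ψ x ∂(s n)) atTop (𝓝 0)) : TendstoVaguelyZero s := by
  intro f hf hfc
  obtain ⟨C, hC⟩ := hfc.exists_abs_le_mul hf hψ hψpos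
  refine squeeze_zero_norm (fun n => ?_) (by simpa using hψs.const_mul C)
  calc ‖∫ x, f x ∂(s n)‖ ≤ ∫ x, C * ψ x ∂(s n) :=
        norm_integral_le_of_norm_le ((hψi n).const_mul C) (.of_forall hC)
    _ = C * ∫ x, ψ x ∂(s n) := integral_const_mul _ _

end Vague

section PenalizedSup

variable {X : Type*} [MeasurableSpace X]

noncomputable def supIntegral (M : Set (Measure X)) (f : X → ℝ) : ℝ :=
  sSup {r : ℝ | ∃ μ ∈ M, r = ∫ x, f x ∂μ}

theorem integral_sub_const_mul {μ : Measure X} {φ ψ : X → ℝ} (hφ : Integrable φ μ)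
    (hψ : Integrable ψ μ) (t : ℝ) :
    ∫ x, (φ x - t * ψ x) ∂μ = ∫ x, φ x ∂μ - t * ∫ x, ψ x ∂μ := by
  rw [integral_sub hφ (hψ.const_mul t), integral_const_mul]

variable {M : Set (Measure X)} {φ ψ : X → ℝ}

theorem exists_lt_integral_of_lt_supIntegral (hM : M.Nonempty) {c : ℝ}
    (hc : c < supIntegral M φ) : ∃ μ ∈ M, c < ∫ x, φ x ∂μ := by
  obtain ⟨μ₀, hμ₀⟩ := hM
  obtain ⟨_, ⟨μ, hμ, rfl⟩, hlt⟩ := exists_lt_of_lt_csSup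
    (s := {r : ℝ | ∃ μ ∈ M, r = ∫ x, φ x ∂μ}) ⟨_, μ₀, hμ₀, rfl⟩ hc
  exact ⟨μ, hμ, hlt⟩

theorem bddAbove_integrals_sub_mul (hint : ∀ μ ∈ M, Integrable φ μ ∧ Integrable ψ μ)
    {β C : ℝ} (hβ : ∀ μ ∈ M, ∫ x, φ x ∂μ ≤ β) (hψC : ∀ μ ∈ M, |∫ x, ψ x ∂μ| ≤ C)
    (t : ℝ) :
    BddAbove {r : ℝ | ∃ μ ∈ M, r = ∫ x, (φ x - t * ψ x) ∂μ} := by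
  refine ⟨β + |t| * C, ?_⟩
  rintro _ ⟨μ, hμ, rfl⟩
  rw [integral_sub_const_mul (hint μ hμ).1 (hint μ hμ).2]
  have : -(t * ∫ x, ψ x ∂μ) ≤ |t| * C := by
    grw [neg_le_abs, abs_mul, hψC μ hμ]
  linarith [hβ μ hμ]

theorem antitone_supIntegral_sub_mul (hM : M.Nonempty)
    (hint : ∀ μ ∈ M, Integrable φ μ ∧ Integrable ψ μ) (hψ0 : ∀ μ ∈ M, 0 ≤ ∫ x, ψ x ∂μ)
    (hbdd : ∀ t, BddAbove {r : ℝ | ∃ μ ∈ M, r = ∫ x, (φ x - t * ψ x) ∂μ}) :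
    Antitone fun t => supIntegral M fun x => φ x - t * ψ x := by
  intro t t' htt'
  obtain ⟨μ₀, hμ₀⟩ := hM
  refine csSup_le ⟨_, μ₀, hμ₀, rfl⟩ ?_
  rintro _ ⟨μ, hμ, rfl⟩
  refine le_trans ?_ (le_csSup (hbdd t) ⟨μ, hμ, rfl⟩)
  rw [integral_sub_const_mul (hint μ hμ).1 (hint μ hμ).2,
    integral_sub_const_mul (hint μ hμ).1 (hint μ hμ).2]
  nlinarith [hψ0 μ hμ]

theorem limsup_integral_le_supIntegral (hint : ∀ μ ∈ M, Integrable φ μ ∧ Integrable ψ μ)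
    {s : ℕ → Measure X} (hsM : ∀ n, s n ∈ M)
    (hψs : Tendsto (fun n => ∫ x, ψ x ∂(s n)) atTop (𝓝 0)) {t : ℝ}
    (hbdd : BddAbove {r : ℝ | ∃ μ ∈ M, r = ∫ x, (φ x - t * ψ x) ∂μ}) :
    limsup (fun n => ((∫ x, φ x ∂(s n) : ℝ) : EReal)) atTop ≤
      supIntegral M fun x => φ x - t * ψ x := by
  set b := supIntegral M fun x => φ x - t * ψ x
  have hb : Tendsto (fun n => ((b + t * ∫ x, ψ x ∂(s n) : ℝ) : EReal)) atTop
      (𝓝 (b : EReal)) :=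
    (continuous_coe_real_ereal.tendsto _).comp (by simpa using (hψs.const_mul t).const_add b)
  refine (limsup_le_limsup (.of_forall fun n => EReal.coe_le_coe_iff.2 ?_)).trans_eq
    hb.limsup_eq
  have : ∫ x, (φ x - t * ψ x) ∂(s n) ≤ b := le_csSup hbdd ⟨s n, hsM n, rfl⟩
  rw [integral_sub_const_mul (hint _ (hsM n)).1 (hint _ (hsM n)).2] at this
  linarith

theorem tendsto_zero_of_succ_mul_le {u : ℕ → ℝ} {B : ℝ} (hu0 : ∀ n, 0 ≤ u n)
    (hu : ∀ n : ℕ, ((n : ℝ) + 1) * u n ≤ B) : Tendsto u atTop (𝓝 0) := by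
  have hB : Tendsto (fun n : ℕ => B / ((n : ℝ) + 1)) atTop (𝓝 0) := by
    simpa [div_eq_mul_inv] using tendsto_one_div_add_atTop_nhds_zero_nat.const_mul B
  exact squeeze_zero hu0 (fun n => (le_div_iff₀' (by positivity)).2 (hu n)) hB

theorem le_limsup_of_sub_inv_succ_le {u : ℕ → ℝ} {l : ℝ}
    (hu : ∀ n : ℕ, l - 1 / ((n : ℝ) + 1) ≤ u n) :
    (l : EReal) ≤ limsup (fun n => (u n : EReal)) atTop := by
  have hl : Tendsto (fun n : ℕ => ((l - 1 / ((n : ℝ) + 1) : ℝ) : EReal)) atTop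
      (𝓝 (l : EReal)) :=
    (continuous_coe_real_ereal.tendsto _).comp
      (by simpa using tendsto_one_div_add_atTop_nhds_zero_nat.const_sub l)
  exact hl.limsup_eq.symm.trans_le
    (limsup_le_limsup (.of_forall fun n => EReal.coe_le_coe_iff.2 (hu n)))

theorem exists_tendstoVaguelyZero_le_limsup [TopologicalSpace X] (hM : M.Nonempty)
    (hint : ∀ μ ∈ M, Integrable φ μ ∧ Integrable ψ μ) {β : ℝ}
    (hβ : ∀ μ ∈ M, ∫ x, φ x ∂μ ≤ β) (hψ : Continuous ψ) (hψpos : ∀ x, 0 < ψ x) {l : ℝ}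
    (hl : ∀ t, l ≤ supIntegral M fun x => φ x - t * ψ x) :
    ∃ s : ℕ → Measure X, (∀ n, s n ∈ M) ∧ TendstoVaguelyZero s ∧
      (l : EReal) ≤ limsup (fun n => ((∫ x, φ x ∂(s n) : ℝ) : EReal)) atTop := by
  have hchoice : ∀ n : ℕ, ∃ μ ∈ M,
      l - 1 / ((n : ℝ) + 1) < ∫ x, φ x ∂μ - ((n : ℝ) + 1) * ∫ x, ψ x ∂μ := fun n => by
    have hn : l - 1 / ((n : ℝ) + 1) < supIntegral M fun x => φ x - ((n : ℝ) + 1) * ψ x :=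
      (sub_lt_self l (by positivity)).trans_le (hl _)
    obtain ⟨μ, hμ, hlt⟩ := exists_lt_integral_of_lt_supIntegral hM hn
    exact ⟨μ, hμ, integral_sub_const_mul (hint μ hμ).1 (hint μ hμ).2 _ ▸ hlt⟩
  choose s hsM hs using hchoice
  have hψ0 : ∀ n : ℕ, 0 ≤ ∫ x, ψ x ∂(s n) := fun n => integral_nonneg fun x => (hψpos x).le
  have hψs : Tendsto (fun n => ∫ x, ψ x ∂(s n)) atTop (𝓝 0) := by
    refine tendsto_zero_of_succ_mul_le hψ0 (B := β - l + 1) fun n => ?_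
    have : 1 / ((n : ℝ) + 1) ≤ 1 :=
      (div_le_one (by positivity)).2 (by linarith [n.cast_nonneg (α := ℝ)])
    linarith [hs n, hβ _ (hsM n)]
  refine ⟨s, hsM,
    tendstoVaguelyZero_of_tendsto_integral hψ hψpos (fun n => (hint _ (hsM n)).2) hψs,
    le_limsup_of_sub_inv_succ_le fun n => ?_⟩
  nlinarith [hs n, hψ0 n, n.cast_nonneg (α := ℝ)]

end PenalizedSup

theorem stmt_3_general {X : Type*} [MetricSpace X]
    [MeasurableSpace X] [BorelSpace X]
    (M : Set (Measure X)) (hMne : M.Nonempty)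
    (hMprob : ∀ μ ∈ M, IsProbabilityMeasure μ)
    (φ ψ : X → ℝ) (hψ : Continuous ψ)
    (hψpos : ∀ x, 0 < ψ x)
    (hψ0 : ∀ ε > (0:ℝ), ∃ K : Set X, IsCompact K ∧ ∀ x ∉ K, |ψ x| < ε)
    (hint : ∀ μ ∈ M, Integrable φ μ ∧ Integrable ψ μ)
    (β : ℝ) (hβ : IsLUB {r : ℝ | ∃ μ ∈ M, r = ∫ x, φ x ∂μ} β)
    (βinf : EReal)
    (hβinf : βinf = sSup {r : EReal | ∃ s : ℕ → Measure X, (∀ n, s n ∈ M) ∧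
      (∀ f : X → ℝ, Continuous f → HasCompactSupport f →
        Tendsto (fun n => ∫ x, f x ∂(s n)) atTop (nhds 0)) ∧
      r = Filter.limsup (fun n => ((∫ x, φ x ∂(s n) : ℝ) : EReal)) atTop}) :
    Tendsto (fun t : ℝ =>
      ((sSup {r : ℝ | ∃ μ ∈ M, r = ∫ x, (φ x - t * ψ x) ∂μ} : ℝ) : EReal))
      atTop (nhds βinf) := by
  have hψc := tendsto_cocompact_zero_of_forall_abs_lt hψ0
  have hφβ : ∀ μ ∈ M, ∫ x, φ x ∂μ ≤ β := fun μ hμ => hβ.1 ⟨μ, hμ, rfl⟩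
  obtain ⟨C, hC⟩ := hψ.exists_norm_le_of_tendsto_cocompact hψc
  have hψC : ∀ μ ∈ M, |∫ x, ψ x ∂μ| ≤ C := fun μ hμ => by
    have := hMprob μ hμ
    simpa using norm_integral_le_of_norm_le_const (μ := μ) (.of_forall hC)
  have hbdd := bddAbove_integrals_sub_mul hint hφβ hψC
  have hanti : Antitone fun t => ((supIntegral M fun x => φ x - t * ψ x : ℝ) : EReal) :=
    fun t t' h => EReal.coe_le_coe_iff.2 <| antitone_supIntegral_sub_mul hMne hint
      (fun μ _ => integral_nonneg fun x => (hψpos x).le) hbdd h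
  suffices βinf = ⨅ t, ((supIntegral M fun x => φ x - t * ψ x : ℝ) : EReal) from
    this ▸ tendsto_atTop_iInf hanti
  refine hβinf ▸ le_antisymm (sSup_le ?_) (EReal.ge_of_forall_gt_iff_ge.1 fun l hl => ?_)
  · rintro _ ⟨s, hsM, hs, rfl⟩
    have := fun n => hMprob _ (hsM n)
    have hψs := TendstoVaguelyZero.tendsto_integral_of_tendsto_cocompact hs hψ
      (fun x => (hψpos x).le) hψc fun n => (hint _ (hsM n)).2
    exact le_iInf fun t => limsup_integral_le_supIntegral hint hsM hψs (hbdd t)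
  · obtain ⟨s, hsM, hs, hls⟩ := exists_tendstoVaguelyZero_le_limsup hMne hint hφβ hψ hψpos
      fun t => EReal.coe_le_coe_iff.1 (hl.le.trans (iInf_le _ t))
    exact hls.trans (le_sSup ⟨s, hsM, hs, rfl⟩)

/-- `β_∞(φ) = lim_{t → ∞} β(φ - tψ)` for a positive test function `ψ`
vanishing at infinity (the limit taken in `EReal`, as it may be `-∞`). -/
theorem stmt_3 {X : Type*} [MetricSpace X] [LocallyCompactSpace X]
    [MeasurableSpace X] [BorelSpace X]
    (M : Set (Measure X)) (hMne : M.Nonempty)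
    (hMprob : ∀ μ ∈ M, IsProbabilityMeasure μ)
    (φ ψ : X → ℝ) (hφ : Continuous φ) (hψ : Continuous ψ)
    (hψpos : ∀ x, 0 < ψ x)
    (hψ0 : ∀ ε > (0:ℝ), ∃ K : Set X, IsCompact K ∧ ∀ x ∉ K, |ψ x| < ε)
    (hint : ∀ μ ∈ M, Integrable φ μ ∧ Integrable ψ μ)
    (β : ℝ) (hβ : IsLUB {r : ℝ | ∃ μ ∈ M, r = ∫ x, φ x ∂μ} β)
    (hex : ∃ s : ℕ → Measure X, (∀ n, s n ∈ M) ∧ ∀ f : X → ℝ, Continuous f →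
      HasCompactSupport f → Tendsto (fun n => ∫ x, f x ∂(s n)) atTop (nhds 0))
    (βinf : EReal)
    (hβinf : βinf = sSup {r : EReal | ∃ s : ℕ → Measure X, (∀ n, s n ∈ M) ∧
      (∀ f : X → ℝ, Continuous f → HasCompactSupport f →
        Tendsto (fun n => ∫ x, f x ∂(s n)) atTop (nhds 0)) ∧
      r = Filter.limsup (fun n => ((∫ x, φ x ∂(s n) : ℝ) : EReal)) atTop}) :
    Tendsto (fun t : ℝ =>
      ((sSup {r : ℝ | ∃ μ ∈ M, r = ∫ x, (φ x - t * ψ x) ∂μ} : ℝ) : EReal))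
      atTop (nhds βinf) :=
  stmt_3_general M hMne hMprob φ ψ hψ hψpos hψ0 hint β hβ βinf hβinf
end

section
/- Suppose M is a set of probability measures on a locally compact metric space X, φ : X → ℝ is bounded above and continuous, and suppose the following compactness-type inequality holds: for every sequence (μₙ) in M converging vaguely to a sub-probability measure μ with μ = λν for some λ ∈ [0,1] and ν ∈ M (or μ = 0), one has limsup ∫ φ dμₙ ≤ ∫ φ dμ + (1 − μ(X))·β_∞(φ). If β_∞(φ) < β(φ) and M is sequentially compact in the vague topology in this extended sense, then there exists m ∈ M with ∫ φ dm = β(φ). -/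
/-!
Take a maximizing sequence in `M` and, by vague sequential compactness, a subsequence converging
vaguely to `l • ν` with `ν ∈ M` and `l ∈ [0, 1]` (the zero limit is the case `l = 0`). The
escape-of-mass inequality gives `β ≤ l ∫ φ dν + (1 - l) β_∞ ≤ l β + (1 - l) β_∞`, and since
`β_∞ < β` this forces `l = 1` and `∫ φ dν = β`.
-/

open MeasureTheory Filter Topology

theorem exists_seq_mem_tendsto_of_isLUB {α γ : Type*} [TopologicalSpace γ] [LinearOrder γ]
    [OrderTopology γ] [NoBotOrder γ] [FirstCountableTopology γ] {M : Set α} {F : α → γ} {b : γ}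
    (h : IsLUB {r | ∃ a ∈ M, r = F a} b) :
    ∃ s : ℕ → α, (∀ n, s n ∈ M) ∧ Tendsto (F ∘ s) atTop (𝓝 b) := by
  obtain ⟨u, -, -, hu, huM⟩ := h.exists_seq_monotone_tendsto h.nonempty
  choose s hsM hus using huM
  refine ⟨s, hsM, ?_⟩
  rwa [show F ∘ s = u from funext fun n => (hus n).symm]

theorem exists_ofReal_smul_eq_of_eq_zero_or {α : Type*} [MeasurableSpace α]
    {M : Set (Measure α)} {μ ν₀ : Measure α} (hν₀ : ν₀ ∈ M)
    (hμ : μ = 0 ∨ ∃ l : ℝ, 0 ≤ l ∧ l ≤ 1 ∧ ∃ ν ∈ M, μ = ENNReal.ofReal l • ν) :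
    ∃ l : ℝ, 0 ≤ l ∧ l ≤ 1 ∧ ∃ ν ∈ M, μ = ENNReal.ofReal l • ν := by
  rcases hμ with rfl | h
  · exact ⟨0, le_rfl, zero_le_one, ν₀, hν₀, by simp⟩
  · exact h

theorem integral_ofReal_smul_measure {α : Type*} [MeasurableSpace α] (μ : Measure α)
    (f : α → ℝ) {l : ℝ} (hl : 0 ≤ l) :
    ∫ x, f x ∂(ENNReal.ofReal l • μ) = l * ∫ x, f x ∂μ := by
  rw [integral_smul_measure, ENNReal.toReal_ofReal hl, smul_eq_mul]

theorem ofReal_smul_measure_univ_toReal {α : Type*} [MeasurableSpace α] (μ : Measure α)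
    [IsProbabilityMeasure μ] {l : ℝ} (hl : 0 ≤ l) :
    ((ENNReal.ofReal l • μ) Set.univ).toReal = l := by
  simp [measure_univ, ENNReal.toReal_ofReal hl]

theorem eq_of_coe_le_add_sub_mul {β I l : ℝ} {b : EReal} (hb : b < β) (hI : I ≤ β)
    (hl₀ : 0 ≤ l) (hl₁ : l ≤ 1)
    (h : (β : EReal) ≤ ((l * I : ℝ) : EReal) + ((1 - l : ℝ) : EReal) * b) : I = β := by
  obtain ⟨c, hbc, hcβ⟩ := EReal.exists_between_coe_real hb
  have hcβ : c < β := EReal.coe_lt_coe_iff.mp hcβ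
  have hβc : β ≤ l * I + (1 - l) * c := by
    have hmul : ((1 - l : ℝ) : EReal) * b ≤ ((1 - l : ℝ) : EReal) * c :=
      mul_le_mul_of_nonneg_left hbc.le (EReal.coe_nonneg.mpr (by linarith))
    exact_mod_cast h.trans (add_le_add le_rfl hmul)
  have hl : l = 1 := by nlinarith
  subst hl
  linarith

theorem stmt_5_general {X : Type*} [MetricSpace X]
    [MeasurableSpace X]
    (M : Set (Measure X))
    (hMprob : ∀ μ ∈ M, IsProbabilityMeasure μ)
    (φ : X → ℝ)
    (β : ℝ) (hβ : IsLUB {r : ℝ | ∃ μ ∈ M, r = ∫ x, φ x ∂μ} β)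
    (βinf : EReal) (hlt : βinf < (β : EReal))
    (hineq : ∀ s : ℕ → Measure X, (∀ n, s n ∈ M) → ∀ μ : Measure X,
      μ Set.univ ≤ 1 →
      (∀ f : X → ℝ, Continuous f → HasCompactSupport f →
        Tendsto (fun n => ∫ x, f x ∂(s n)) atTop (nhds (∫ x, f x ∂μ))) →
      Filter.limsup (fun n => ((∫ x, φ x ∂(s n) : ℝ) : EReal)) atTop ≤
        ((∫ x, φ x ∂μ : ℝ) : EReal) +
          (((1 : ℝ) - (μ Set.univ).toReal : ℝ) : EReal) * βinf)
    (hcpt : ∀ s : ℕ → Measure X, (∀ n, s n ∈ M) → ∃ k : ℕ → ℕ, StrictMono k ∧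
      ∃ μ : Measure X, μ Set.univ ≤ 1 ∧
        (μ = 0 ∨ ∃ l : ℝ, 0 ≤ l ∧ l ≤ 1 ∧ ∃ ν ∈ M, μ = (ENNReal.ofReal l) • ν) ∧
        (∀ f : X → ℝ, Continuous f → HasCompactSupport f →
          Tendsto (fun n => ∫ x, f x ∂(s (k n))) atTop (nhds (∫ x, f x ∂μ)))) :
    ∃ m ∈ M, ∫ x, φ x ∂m = β := by
  obtain ⟨s, hsM, hs⟩ := exists_seq_mem_tendsto_of_isLUB hβ
  obtain ⟨k, hk, μ, hμ₁, hμ, hsμ⟩ := hcpt s hsM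
  obtain ⟨l, hl₀, hl₁, ν, hν, rfl⟩ := exists_ofReal_smul_eq_of_eq_zero_or (hsM 0) hμ
  have := hMprob ν hν
  have hlimsup : limsup (fun n => ((∫ x, φ x ∂(s (k n)) : ℝ) : EReal)) atTop = β :=
    (EReal.tendsto_coe.mpr (hs.comp hk.tendsto_atTop)).limsup_eq
  have hescape := hineq (s ∘ k) (fun n => hsM (k n)) _ hμ₁ hsμ
  rw [Function.comp_def, hlimsup, integral_ofReal_smul_measure _ _ hl₀,
    ofReal_smul_measure_univ_toReal _ hl₀] at hescape
  exact ⟨ν, hν, eq_of_coe_le_add_sub_mul hlt (hβ.1 ⟨ν, hν, rfl⟩) hl₀ hl₁ hescape⟩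

/-- if `β_∞(φ) < β(φ)` and the escape-of-mass inequality holds along
vaguely convergent sequences, together with vague sequential compactness with limits
of the form `λ • ν` with `ν ∈ M` (or zero), then `φ` has a maximizing measure. -/
theorem stmt_5 {X : Type*} [MetricSpace X] [LocallyCompactSpace X]
    [MeasurableSpace X] [BorelSpace X]
    (M : Set (Measure X)) (hMne : M.Nonempty)
    (hMprob : ∀ μ ∈ M, IsProbabilityMeasure μ)
    (φ : X → ℝ) (hφ : Continuous φ) (hbdd : ∃ C, ∀ x, φ x ≤ C)
    (β : ℝ) (hβ : IsLUB {r : ℝ | ∃ μ ∈ M, r = ∫ x, φ x ∂μ} β)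
    (βinf : EReal) (hlt : βinf < (β : EReal))
    (hineq : ∀ s : ℕ → Measure X, (∀ n, s n ∈ M) → ∀ μ : Measure X,
      μ Set.univ ≤ 1 →
      (∀ f : X → ℝ, Continuous f → HasCompactSupport f →
        Tendsto (fun n => ∫ x, f x ∂(s n)) atTop (nhds (∫ x, f x ∂μ))) →
      Filter.limsup (fun n => ((∫ x, φ x ∂(s n) : ℝ) : EReal)) atTop ≤
        ((∫ x, φ x ∂μ : ℝ) : EReal) +
          (((1 : ℝ) - (μ Set.univ).toReal : ℝ) : EReal) * βinf)
    (hcpt : ∀ s : ℕ → Measure X, (∀ n, s n ∈ M) → ∃ k : ℕ → ℕ, StrictMono k ∧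
      ∃ μ : Measure X, μ Set.univ ≤ 1 ∧
        (μ = 0 ∨ ∃ l : ℝ, 0 ≤ l ∧ l ≤ 1 ∧ ∃ ν ∈ M, μ = (ENNReal.ofReal l) • ν) ∧
        (∀ f : X → ℝ, Continuous f → HasCompactSupport f →
          Tendsto (fun n => ∫ x, f x ∂(s (k n))) atTop (nhds (∫ x, f x ∂μ)))) :
    ∃ m ∈ M, ∫ x, φ x ∂m = β :=
  stmt_5_general M hMprob φ β hβ βinf hlt hineq hcpt
end

section
/- Let (μₙ) be a sequence of probability measures on a locally compact metric space converging vaguely to a sub-probability measure μ with μ(X) > 0, and let φ be bounded above and continuous with ∫ φ dμₙ → β(φ) (the supremum of ∫ φ over the given measure class M, finite). Assume the escape-of-mass inequality limsup ∫ φ dμₙ ≤ ∫ φ dμ + (1 − μ(X)) β_∞(φ) holds and β_∞(φ) ≤ β(φ). Then the normalized measure μ/μ(X) satisfies ∫ φ d(μ/μ(X)) ≥ β(φ); in particular if μ/μ(X) ∈ M it is a maximizing measure. -/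
/-!
Since the optimizing sequence converges to `β`, its limsup is `β`, so the escape-of-mass
inequality together with `β_∞ ≤ β` gives `β ≤ ∫ φ dμ + (1 - μ(X)) β`, i.e.
`μ(X) β ≤ ∫ φ dμ`; dividing by `μ(X) > 0` is the claim.
-/

open MeasureTheory Filter

lemma EReal.coe_le_add_mul_coe_of_le_add_mul {β I c : ℝ} {b : EReal} (hc : 0 ≤ c) (hb : b ≤ β)
    (h : (β : EReal) ≤ I + c * b) : β ≤ I + c * β := by
  have : (β : EReal) ≤ ((I + c * β : ℝ) : EReal) := by
    rw [EReal.coe_add, EReal.coe_mul]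
    exact h.trans (add_le_add_right (mul_le_mul_of_nonneg_left hb (EReal.coe_nonneg.2 hc)) _)
  exact_mod_cast this

lemma le_inv_mul_of_le_add_one_sub_mul {m I β : ℝ} (hm : 0 < m) (h : β ≤ I + (1 - m) * β) :
    β ≤ m⁻¹ * I := by
  rw [le_inv_mul_iff₀ hm]
  linarith

lemma integral_inv_measure_univ_smul {X : Type*} [MeasurableSpace X] (μ : Measure X) (f : X → ℝ) :
    ∫ x, f x ∂((μ Set.univ)⁻¹ • μ) = (μ Set.univ).toReal⁻¹ * ∫ x, f x ∂μ := by
  rw [integral_smul_measure, ENNReal.toReal_inv, smul_eq_mul]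

theorem stmt_7_general {X : Type*}
    [MeasurableSpace X]
    (M : Set (Measure X))
    (φ : X → ℝ)
    (β : ℝ) (hβ : IsLUB {r : ℝ | ∃ ν ∈ M, r = ∫ x, φ x ∂ν} β)
    (βinf : EReal) (hβinfle : βinf ≤ (β : EReal))
    (μn : ℕ → Measure X)
    (μ : Measure X) (hmass0 : μ Set.univ ≠ 0) (hmass1 : μ Set.univ ≤ 1)
    (htend : Tendsto (fun n => ∫ x, φ x ∂(μn n)) atTop (nhds β))
    (hineq : Filter.limsup (fun n => ((∫ x, φ x ∂(μn n) : ℝ) : EReal)) atTop ≤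
      ((∫ x, φ x ∂μ : ℝ) : EReal) +
        (((1:ℝ) - (μ Set.univ).toReal : ℝ) : EReal) * βinf) :
    β ≤ ∫ x, φ x ∂((μ Set.univ)⁻¹ • μ) ∧
      ((μ Set.univ)⁻¹ • μ ∈ M → ∫ x, φ x ∂((μ Set.univ)⁻¹ • μ) = β) := by
  have hm0 : 0 < (μ Set.univ).toReal :=
    ENNReal.toReal_pos hmass0 (ne_top_of_le_ne_top ENNReal.one_ne_top hmass1)
  have hm1 : (μ Set.univ).toReal ≤ 1 := ENNReal.toReal_le_of_le_ofReal zero_le_one (by simpa)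
  have hlimsup : limsup (fun n => ((∫ x, φ x ∂(μn n) : ℝ) : EReal)) atTop = β :=
    (EReal.tendsto_coe.2 htend).limsup_eq
  have hβle : β ≤ ∫ x, φ x ∂((μ Set.univ)⁻¹ • μ) := by
    rw [integral_inv_measure_univ_smul]
    refine le_inv_mul_of_le_add_one_sub_mul hm0 ?_
    exact EReal.coe_le_add_mul_coe_of_le_add_mul (sub_nonneg.2 hm1) hβinfle (hlimsup ▸ hineq)
  exact ⟨hβle, fun hmem => le_antisymm (hβ.1 ⟨_, hmem, rfl⟩) hβle⟩

/-- an optimizing sequence with vague limit `μ` of positive mass yields,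
under the escape-of-mass inequality and `β_∞(φ) ≤ β(φ)`, that the normalization of
`μ` has integral at least `β(φ)`; if it belongs to `M` it is maximizing. -/
theorem stmt_7 {X : Type*} [MetricSpace X] [LocallyCompactSpace X]
    [MeasurableSpace X] [BorelSpace X]
    (M : Set (Measure X)) (hMprob : ∀ ν ∈ M, IsProbabilityMeasure ν)
    (φ : X → ℝ) (hφ : Continuous φ) (hbdd : ∃ C, ∀ x, φ x ≤ C)
    (β : ℝ) (hβ : IsLUB {r : ℝ | ∃ ν ∈ M, r = ∫ x, φ x ∂ν} β)
    (βinf : EReal) (hβinfle : βinf ≤ (β : EReal))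
    (μn : ℕ → Measure X) (hμn : ∀ n, μn n ∈ M)
    (μ : Measure X) (hmass0 : μ Set.univ ≠ 0) (hmass1 : μ Set.univ ≤ 1)
    (hvague : ∀ f : X → ℝ, Continuous f → HasCompactSupport f →
      Tendsto (fun n => ∫ x, f x ∂(μn n)) atTop (nhds (∫ x, f x ∂μ)))
    (htend : Tendsto (fun n => ∫ x, φ x ∂(μn n)) atTop (nhds β))
    (hineq : Filter.limsup (fun n => ((∫ x, φ x ∂(μn n) : ℝ) : EReal)) atTop ≤
      ((∫ x, φ x ∂μ : ℝ) : EReal) +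
        (((1:ℝ) - (μ Set.univ).toReal : ℝ) : EReal) * βinf) :
    β ≤ ∫ x, φ x ∂((μ Set.univ)⁻¹ • μ) ∧
      ((μ Set.univ)⁻¹ • μ ∈ M → ∫ x, φ x ∂((μ Set.univ)⁻¹ • μ) = β) :=
  stmt_7_general M φ β hβ βinf hβinfle μn μ hmass0 hmass1 htend hineq
end
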